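/- arXiv:2308.01456 — 2 statements merged into one kernel-verified Lean document; each statement's English description precedes it below -/
import Mathlib

section
/- (Harary) Let G be a connected graph with two signatures γ and γ'. If every circuit of G has the same weight under γ as under γ', then γ' is a shifting of γ. -/
/-!
Put `δ = γ' - γ`, so that every circuit has `δ`-weight `0`. Circuits of length one and two show
that `δ` vanishes on loops and takes the same value on parallel edges, so `δ` is a weight on the
edges of the underlying simple graph, where every cycle has weight `0`. Shortcutting a closed walk
(`Walk.bypass`) only removes cycles and back-and-forth steps, so every closed walk has weight `0`.
In a connected graph the weight `f x` of any walk from a fixed root to `x` is therefore a potential: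
`δ e = f u + f w` for every non-loop edge `e = uw`, and shifting at the vertices with `f = 1` turns
`γ` into `γ'`.
-/

open scoped Classical

namespace SignedFlood

variable {V E : Type} [Fintype V] [DecidableEq V] [Fintype E] [DecidableEq E]

/-- A circuit (closed trail) in a multigraph specified by `ends : E → Sym2 V`.
Darts are triples `(e, u, v)` meaning edge `e` traversed from `u` to `v`. -/
structure Circuit {V E : Type} (ends : E → Sym2 V) where
  darts : List (E × V × V)
  nonempty : darts ≠ []
  valid : ∀ d ∈ darts, ends d.1 = Sym2.mk d.2.1 d.2.2
  chain : darts.Chain' (fun d d' => d.2.2 = d'.2.1)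
  closed : darts.head?.map (fun d => d.2.1) = darts.getLast?.map (fun d => d.2.2)
  edgesNodup : (darts.map Prod.fst).Nodup

namespace Circuit

variable {ends : E → Sym2 V}

/-- The set of edges used by a circuit. -/
def edges (C : Circuit ends) : Finset E := (C.darts.map Prod.fst).toFinset

/-- The weight of a circuit: the sum in `ZMod 2` of the weights of its edges. -/
def weight (γ : E → ZMod 2) (C : Circuit ends) : ZMod 2 :=
  ((C.darts.map Prod.fst).map γ).sum

/-- A circuit hits `b` if it has an edge (dart) incident to `b`. -/
def Hits (C : Circuit ends) (b : V) : Prop :=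
  ∃ d ∈ C.darts, d.2.1 = b ∨ d.2.2 = b

/-- A circuit has `b` as its tail and head. -/
def BasedAt (C : Circuit ends) (b : V) : Prop :=
  C.darts.head?.map (fun d => d.2.1) = some b

end Circuit

/-- Degree of a vertex: loops count twice. -/
noncomputable def degree (ends : E → Sym2 V) (v : V) : ℕ :=
  ∑ e : E, (if ends e = Sym2.mk v v then 2 else if v ∈ ends e then 1 else 0)

/-- Adjacency via some edge. -/
def Adj (ends : E → Sym2 V) (u v : V) : Prop := ∃ e, ends e = Sym2.mk u v

/-- The multigraph is connected. -/
def Connected (ends : E → Sym2 V) : Prop :=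
  ∀ u v : V, Relation.ReflTransGen (Adj ends) u v

/-- Eulerian: connected with all degrees even. -/
def IsEulerian (ends : E → Sym2 V) : Prop :=
  Connected ends ∧ ∀ v : V, Even (degree ends v)

/-- A family of circuits whose edge sets partition the edge set. -/
def IsDecomposition (ends : E → Sym2 V) {k : ℕ} (C : Fin k → Circuit ends) : Prop :=
  ∀ e : E, ∃! i : Fin k, e ∈ (C i).edges

/-- The flooding number: the maximum size of a circuit-decomposition where each
circuit is non-zero and hits `b` (`0` if there is no such decomposition). -/
noncomputable def floodingNumber (ends : E → Sym2 V) (γ : E → ZMod 2) (b : V) : ℕ :=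
  sSup {k : ℕ | ∃ C : Fin k → Circuit ends, IsDecomposition ends C ∧
    ∀ i, (C i).weight γ = 1 ∧ (C i).Hits b}

/-- Shift a signature at a vertex `v`: add `1` to every non-loop edge incident to `v`. -/
noncomputable def shiftAt (ends : E → Sym2 V) (γ : E → ZMod 2) (v : V) : E → ZMod 2 :=
  fun e => γ e + (if v ∈ ends e ∧ ends e ≠ Sym2.mk v v then 1 else 0)

/-- `γ'` is a shifting of `γ`: obtained by a sequence of shifts at vertices. -/
noncomputable def IsShifting (ends : E → Sym2 V) (γ γ' : E → ZMod 2) : Prop :=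
  ∃ l : List V, γ' = l.foldl (shiftAt ends) γ

/-- A pair crosses `X` if it has exactly one member in `X`. -/
def Crossing (X : Set V) (p : Sym2 V) : Prop :=
  ∃ u v, p = Sym2.mk u v ∧ u ∈ X ∧ v ∉ X

/-- `δ(X)`: edges with exactly one end in `X`. -/
noncomputable def cutEdges (ends : E → Sym2 V) (X : Set V) : Finset E :=
  Finset.univ.filter (fun e => Crossing X (ends e))

/-- `E(X)`: edges with both ends in `X`. -/
noncomputable def insideEdges (ends : E → Sym2 V) (X : Set V) : Finset E :=
  Finset.univ.filter (fun e => ∀ v ∈ ends e, v ∈ X)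

/-- `E(Y) ∪ δ(Y)`: edges with at least one end in `Y`. -/
noncomputable def incidentEdges (ends : E → Sym2 V) (Y : Set V) : Finset E :=
  Finset.univ.filter (fun e => ∃ v ∈ ends e, v ∈ Y)

/-- The number of non-zero edges in `F` according to `γ`. -/
noncomputable def nzCount (γ : E → ZMod 2) (F : Finset E) : ℕ :=
  (F.filter (fun e => γ e = 1)).card

/-- `Y` is `γ`-odd: parity of `γ(E(Y) ∪ δ(Y))` differs from parity of `|δ(Y)|/2`. -/
def OddSet (ends : E → Sym2 V) (γ : E → ZMod 2) (Y : Set V) : Prop :=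
  nzCount γ (incidentEdges ends Y) % 2 ≠ ((cutEdges ends Y).card / 2) % 2

/-- The vertex set of the component of `G - X` containing `y`. -/
def compOf (ends : E → Sym2 V) (X : Set V) (y : V) : Set V :=
  {z | Relation.ReflTransGen
    (fun a c => (∃ e, ends e = Sym2.mk a c) ∧ a ∉ X ∧ c ∉ X) y z}

/-- `Y` is the vertex set of a component of `G - X`. -/
def IsCompOf (ends : E → Sym2 V) (X : Set V) (Y : Set V) : Prop :=
  ∃ y, y ∉ X ∧ Y = compOf ends X y

/-- The number of `γ`-odd components of `G - X`. -/
noncomputable def oddComponents (ends : E → Sym2 V) (γ : E → ZMod 2) (X : Set V) : ℕ :=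
  Set.ncard {Y : Set V | IsCompOf ends X Y ∧ OddSet ends γ Y}

/-- A flooding: a circuit-decomposition into `deg(b)/2` circuits, each with `b`
as tail and head. -/
def IsFlooding (ends : E → Sym2 V) (b : V) {k : ℕ} (C : Fin k → Circuit ends) : Prop :=
  k = degree ends b / 2 ∧ IsDecomposition ends C ∧ ∀ i, (C i).BasedAt b

/-- The number of non-zero circuits in a family of circuits. -/
noncomputable def nonzeroCount (ends : E → Sym2 V) (γ : E → ZMod 2) {k : ℕ}
    (C : Fin k → Circuit ends) : ℕ :=
  (Finset.univ.filter (fun i : Fin k => (C i).weight γ = 1)).card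

/-- An optimal flooding maximizes the number of non-zero circuits. -/
def IsOptimalFlooding (ends : E → Sym2 V) (γ : E → ZMod 2) (b : V) {k : ℕ}
    (C : Fin k → Circuit ends) : Prop :=
  IsFlooding ends b C ∧ ∀ (k' : ℕ) (C' : Fin k' → Circuit ends),
    IsFlooding ends b C' → nonzeroCount ends γ C' ≤ nonzeroCount ends γ C

end SignedFlood

namespace SignedFlood

section

open SimpleGraph

variable {V E : Type} {ends : E → Sym2 V}

namespace Circuit

lemma weight_sub (γ γ' : E → ZMod 2) (C : Circuit ends) :
    C.weight (γ' - γ) = C.weight γ' - C.weight γ := by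
  unfold weight
  induction C.darts with
  | nil => simp
  | cons d l ih => simp only [List.map_cons, List.sum_cons, ih, Pi.sub_apply]; abel

def ofLoop {e : E} {v : V} (he : ends e = s(v, v)) : Circuit ends where
  darts := [(e, v, v)]
  nonempty := by simp
  valid := by simpa using he
  chain := List.isChain_singleton _
  closed := rfl
  edgesNodup := List.nodup_singleton _

def ofParallel {e e' : E} {u w : V} (hne : e ≠ e') (he : ends e = s(u, w))
    (he' : ends e' = s(u, w)) : Circuit ends where
  darts := [(e, u, w), (e', w, u)]
  nonempty := by simp
  valid := by simp [he, he', Sym2.eq_swap]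
  chain := List.isChain_pair.mpr rfl
  closed := rfl
  edgesNodup := by simp [hne]

end Circuit

abbrev toSimpleGraph (ends : E → Sym2 V) : SimpleGraph V := fromEdgeSet (Set.range ends)

lemma mem_range_of_adj {u v : V} (h : (toSimpleGraph ends).Adj u v) : s(u, v) ∈ Set.range ends :=
  h.1

noncomputable def edgeOf {z : Sym2 V} (h : z ∈ Set.range ends) : E :=
  (Set.mem_range.mp h).choose

lemma ends_edgeOf {z : Sym2 V} (h : z ∈ Set.range ends) : ends (edgeOf h) = z :=
  (Set.mem_range.mp h).choose_spec

noncomputable def Circuit.ofCycle {v : V} {c : (toSimpleGraph ends).Walk v v} (hc : c.IsCycle) :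
    Circuit ends where
  darts := c.darts.map fun d => (edgeOf (mem_range_of_adj d.adj), d.fst, d.snd)
  nonempty := by simpa using hc.ne_nil
  valid := by
    simp only [List.mem_map, forall_exists_index, and_imp, forall_apply_eq_imp_iff₂]
    exact fun d _ => ends_edgeOf _
  chain := by
    show List.IsChain _ _
    rw [List.isChain_map]
    exact c.isChain_dartAdj_darts
  closed := by
    have hne : c.darts ≠ [] := by simpa using hc.ne_nil
    simp [List.head?_eq_some_head hne, List.getLast?_eq_some_getLast hne]
  edgesNodup := by
    refine List.Nodup.of_map ends ?_
    convert hc.edges_nodup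
    simp [SimpleGraph.Walk.edges, ends_edgeOf, SimpleGraph.Dart.edge]

section Weights

variable (ends) (δ : E → ZMod 2)

noncomputable def pairWeight (z : Sym2 V) : ZMod 2 :=
  if h : z ∈ Set.range ends then δ (edgeOf h) else 0

noncomputable def walkWeight {u v : V} (p : (toSimpleGraph ends).Walk u v) : ZMod 2 :=
  (p.edges.map (pairWeight ends δ)).sum

variable {ends δ} {u v w : V}

lemma pairWeight_of_mem {z : Sym2 V} (h : z ∈ Set.range ends) :
    pairWeight ends δ z = δ (edgeOf h) :=
  dif_pos h

@[simp] lemma walkWeight_nil : walkWeight ends δ (Walk.nil : (toSimpleGraph ends).Walk u u) = 0 :=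
  rfl

@[simp] lemma walkWeight_cons (h : (toSimpleGraph ends).Adj u v)
    (p : (toSimpleGraph ends).Walk v w) :
    walkWeight ends δ (p.cons h) = pairWeight ends δ s(u, v) + walkWeight ends δ p := by
  simp [walkWeight]

@[simp] lemma walkWeight_append (p : (toSimpleGraph ends).Walk u v)
    (q : (toSimpleGraph ends).Walk v w) :
    walkWeight ends δ (p.append q) = walkWeight ends δ p + walkWeight ends δ q := by
  simp [walkWeight]

@[simp] lemma walkWeight_reverse (p : (toSimpleGraph ends).Walk u v) :
    walkWeight ends δ p.reverse = walkWeight ends δ p := by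
  simp [walkWeight]

lemma Circuit.weight_ofCycle {c : (toSimpleGraph ends).Walk v v} (hc : c.IsCycle) :
    (Circuit.ofCycle hc).weight δ = walkWeight ends δ c := by
  simp only [Circuit.weight, Circuit.ofCycle, walkWeight, Walk.edges, List.map_map]
  refine congrArg List.sum (List.map_congr_left fun d _ => ?_)
  exact (pairWeight_of_mem (mem_range_of_adj d.adj)).symm

end Weights

section NullCircuits

variable {δ : E → ZMod 2} {u v w : V}

lemma eq_zero_of_ends_eq_diag (hδ : ∀ C : Circuit ends, C.weight δ = 0) {e : E}
    (he : ends e = s(v, v)) : δ e = 0 := by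
  simpa [Circuit.weight, Circuit.ofLoop] using hδ (Circuit.ofLoop he)

lemma eq_of_ends_eq (hδ : ∀ C : Circuit ends, C.weight δ = 0) {e e' : E}
    (h : ends e = ends e') : δ e = δ e' := by
  obtain rfl | hne := eq_or_ne e e'
  · rfl
  induction he : ends e using Sym2.ind with
  | _ u w =>
    have := hδ (Circuit.ofParallel hne he (h ▸ he))
    simp only [Circuit.weight, Circuit.ofParallel, List.map_cons, List.map_nil, List.sum_cons,
      List.sum_nil, add_zero] at this
    exact CharTwo.add_eq_zero.mp this

lemma pairWeight_ends (hδ : ∀ C : Circuit ends, C.weight δ = 0) (e : E) :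
    pairWeight ends δ (ends e) = δ e := by
  rw [pairWeight_of_mem ⟨e, rfl⟩]
  exact eq_of_ends_eq hδ (ends_edgeOf _)

lemma walkWeight_eq_zero_of_isCycle (hδ : ∀ C : Circuit ends, C.weight δ = 0)
    {c : (toSimpleGraph ends).Walk v v} (hc : c.IsCycle) : walkWeight ends δ c = 0 := by
  rw [← Circuit.weight_ofCycle hc]
  exact hδ _

end NullCircuits

section ClosedWalks

variable {δ : E → ZMod 2} {u v : V}

lemma walkWeight_cons_eq_zero_of_isPath (hδ : ∀ C : Circuit ends, C.weight δ = 0)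
    (h : (toSimpleGraph ends).Adj u v) {q : (toSimpleGraph ends).Walk v u} (hq : q.IsPath) :
    walkWeight ends δ (q.cons h) = 0 := by
  by_cases hmem : s(v, u) ∈ q.edges
  · rw [hq.eq_adj_toWalk_of_mem_edges hmem]
    simp [Sym2.eq_swap, CharTwo.add_self_eq_zero]
  · rw [Sym2.eq_swap] at hmem
    exact walkWeight_eq_zero_of_isCycle hδ ((Walk.cons_isCycle_iff q h).mpr ⟨hq, hmem⟩)

lemma walkWeight_bypass (hδ : ∀ C : Circuit ends, C.weight δ = 0)
    (p : (toSimpleGraph ends).Walk u v) : walkWeight ends δ p.bypass = walkWeight ends δ p := by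
  induction p with
  | nil => rfl
  | cons h p ih =>
    rw [Walk.bypass]
    split_ifs with hs
    · have hsplit := congrArg (walkWeight ends δ) (p.bypass.take_spec hs)
      rw [walkWeight_cons, ← ih, ← hsplit, walkWeight_append, ← add_assoc,
        ← walkWeight_cons h,
        walkWeight_cons_eq_zero_of_isPath hδ h (p.bypass_isPath.takeUntil hs), zero_add]
    · simp [ih]

lemma walkWeight_closed_eq_zero (hδ : ∀ C : Circuit ends, C.weight δ = 0)
    (p : (toSimpleGraph ends).Walk v v) : walkWeight ends δ p = 0 := by
  rw [← walkWeight_bypass hδ, (Walk.isPath_iff_nil.mp p.bypass_isPath).eq_nil, walkWeight_nil]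

end ClosedWalks

lemma adj_of_ends_eq {e : E} {u v : V} (he : ends e = s(u, v)) (hne : u ≠ v) :
    (toSimpleGraph ends).Adj u v :=
  ⟨⟨e, he⟩, hne⟩

lemma reachable_of_connected (hconn : Connected ends) (u v : V) :
    (toSimpleGraph ends).Reachable u v := by
  induction hconn u v with
  | refl => rfl
  | @tail b c _ hadj ih =>
    obtain ⟨e, he⟩ := hadj
    obtain rfl | hne := eq_or_ne b c
    · exact ih
    · exact ih.trans ((adj_of_ends_eq he hne).reachable)

lemma exists_potential [DecidableEq V] {δ : E → ZMod 2} (hconn : Connected ends)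
    (hδ : ∀ C : Circuit ends, C.weight δ = 0) :
    ∃ f : V → ZMod 2, ∀ e u w, ends e = s(u, w) →
      δ e = if u = w then 0 else f u + f w := by
  rcases isEmpty_or_nonempty V with hV | ⟨⟨r⟩⟩
  · exact ⟨0, fun _ u => isEmptyElim u⟩
  let path (x : V) := (reachable_of_connected hconn r x).some
  refine ⟨fun x => walkWeight ends δ (path x), fun e u w he => ?_⟩
  split_ifs with huw
  · subst huw
    exact eq_zero_of_ends_eq_diag hδ he
  · have hadj : (toSimpleGraph ends).Adj u w := adj_of_ends_eq he huw
    have hclosed := walkWeight_closed_eq_zero hδ ((path u).append ((path w).reverse.cons hadj))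
    rw [walkWeight_append, walkWeight_cons, walkWeight_reverse, ← he,
      pairWeight_ends hδ] at hclosed
    grind

lemma foldl_shiftAt_apply [DecidableEq V] (l : List V) (γ : E → ZMod 2) (e : E) :
    l.foldl (shiftAt ends) γ e =
      γ e + (l.map fun v => if v ∈ ends e ∧ ends e ≠ s(v, v) then 1 else 0).sum := by
  induction l generalizing γ with
  | nil => simp
  | cons v l ih => simp only [List.foldl_cons, ih, shiftAt, List.map_cons, List.sum_cons, add_assoc]

lemma isShifting_of_eq_add_potential [DecidableEq V] [Fintype V] {γ γ' : E → ZMod 2}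
    (f : V → ZMod 2)
    (h : ∀ e u w, ends e = s(u, w) → γ' e = γ e + if u = w then 0 else f u + f w) :
    IsShifting ends γ γ' := by
  refine ⟨(Finset.univ.filter (f · = 1)).toList, funext fun e => ?_⟩
  induction he : ends e using Sym2.ind with
  | _ u w =>
    rw [foldl_shiftAt_apply, h e u w he, Finset.sum_map_toList, he]
    congr 1
    split_ifs with huw
    · subst huw
      refine (Finset.sum_eq_zero fun v _ => ?_).symm
      simp +contextual
    · have hind (v : V) : (if v ∈ s(u, w) ∧ s(u, w) ≠ s(v, v) then (1 : ZMod 2) else 0) =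
          (if v = u then 1 else 0) + (if v = w then 1 else 0) := by
        by_cases hu : v = u <;> by_cases hw : v = w <;> simp_all [eq_comm]
      have hf (x : ZMod 2) : (if x = 1 then 1 else 0) = x := by revert x; decide
      simp only [hind, Finset.sum_add_distrib, Finset.sum_ite_eq', Finset.mem_filter,
        Finset.mem_univ, true_and, hf]

end

variable {V E : Type} [Fintype V] [DecidableEq V] [Fintype E] [DecidableEq E]

/-- Harary: if every circuit of a connected graph has the same weight
under `γ` and `γ'`, then `γ'` is a shifting of `γ`. -/
theorem harary (ends : E → Sym2 V) (γ γ' : E → ZMod 2)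
    (hconn : Connected ends)
    (hsame : ∀ C : Circuit ends, C.weight γ = C.weight γ') :
    IsShifting ends γ γ' := by
  have hδ : ∀ C : Circuit ends, C.weight (γ' - γ) = 0 := fun C => by
    rw [Circuit.weight_sub, hsame, sub_self]
  obtain ⟨f, hf⟩ := exists_potential hconn hδ
  exact isShifting_of_eq_add_potential f fun e u w he => by
    rw [← hf e u w he, Pi.sub_apply, add_sub_cancel]

end SignedFlood
end

section
/- For any RES-graph (G, γ, b), the maximum number of non-zero circuits in a flooding of (G, γ, b) equals the flooding number ν̃(G, γ, b). -/
open scoped Classical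

namespace SignedFlood

variable {V E : Type} [Fintype V] [DecidableEq V] [Fintype E] [DecidableEq E]

/-!
A decomposition of `E(G)` into non-zero circuits through `b` becomes a flooding by rotating
each circuit so that it starts at `b` and cutting it at every visit of `b`. Each visit uses two
edge-ends at `b`, so there are `deg(b)/2` pieces, and since the weights of the pieces of a circuit
add up to its weight, every non-zero circuit leaves at least one non-zero piece. Conversely,
concatenating all zero circuits of a flooding with one of its non-zero circuits (all of them are
closed walks at `b`) gives a decomposition into as many non-zero circuits through `b` as the
flooding has non-zero circuits.
-/

set_option linter.unusedSectionVars false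

/-- `l` is a walk from `u` to `v`: listing the tails of its darts and then `v` gives the same
sequence as `u` followed by the heads of its darts. -/
def IsDartWalk (u v : V) (l : List (E × V × V)) : Prop :=
  l.map (·.2.1) ++ [v] = u :: l.map (·.2.2)

section DartWalk

variable {u v w : V} {l l₁ l₂ : List (E × V × V)}

@[simp] lemma isDartWalk_nil : IsDartWalk u v ([] : List (E × V × V)) ↔ u = v := by
  simp [IsDartWalk, eq_comm]

@[simp] lemma isDartWalk_cons {d : E × V × V} :
    IsDartWalk u v (d :: l) ↔ d.2.1 = u ∧ IsDartWalk d.2.2 v l := by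
  simp [IsDartWalk]

lemma isDartWalk_iff_isChain (hl : l ≠ []) :
    IsDartWalk u v l ↔ l.IsChain (fun d d' => d.2.2 = d'.2.1) ∧
      l.head?.map (·.2.1) = some u ∧ l.getLast?.map (·.2.2) = some v := by
  induction l generalizing u with
  | nil => exact absurd rfl hl
  | cons d t ih =>
    rcases t with _ | ⟨d', t⟩
    · simp
    · simp only [isDartWalk_cons] at ih ⊢
      rw [ih (List.cons_ne_nil _ _)]
      simp [List.isChain_cons_cons, List.getLast?_cons_cons]
      tauto

namespace IsDartWalk

lemma append (h₁ : IsDartWalk u v l₁) (h₂ : IsDartWalk v w l₂) :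
    IsDartWalk u w (l₁ ++ l₂) := by
  unfold IsDartWalk at *
  rw [List.map_append, List.append_assoc, h₂, List.append_cons, h₁, List.map_append,
    List.cons_append]

lemma split {d : E × V × V} (h : IsDartWalk u w (l₁ ++ d :: l₂)) :
    IsDartWalk u d.2.1 l₁ ∧ IsDartWalk d.2.1 w (d :: l₂) := by
  have h' : (l₁.map (·.2.1) ++ [d.2.1]) ++ (l₂.map (·.2.1) ++ [w]) =
      (u :: l₁.map (·.2.2)) ++ (d.2.2 :: l₂.map (·.2.2)) := by
    simpa [IsDartWalk] using h
  obtain ⟨h₁, h₂⟩ := List.append_inj h' (by simp)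
  exact ⟨h₁, isDartWalk_cons.2 ⟨rfl, h₂⟩⟩

lemma tails_perm_heads (h : IsDartWalk u u l) : (l.map (·.2.1)).Perm (l.map (·.2.2)) := by
  rw [← List.perm_cons u, ← h]
  exact (List.perm_append_singleton _ _).symm

lemma flatMap {α : Type*} {f : α → List (E × V × V)} :
    ∀ {L : List α}, (∀ x ∈ L, IsDartWalk u u (f x)) → IsDartWalk u u (L.flatMap f)
  | [], _ => isDartWalk_nil.2 rfl
  | x :: L, h => by
    rw [List.flatMap_cons]
    exact (h x List.mem_cons_self).append (flatMap fun y hy => h y (List.mem_cons_of_mem _ hy))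

end IsDartWalk

end DartWalk

def IsDartTrail (ends : E → Sym2 V) (l : List (E × V × V)) : Prop :=
  (∀ d ∈ l, ends d.1 = s(d.2.1, d.2.2)) ∧ (l.map Prod.fst).Nodup

namespace IsDartTrail

variable {ends : E → Sym2 V} {l l' : List (E × V × V)}

lemma sublist (h : IsDartTrail ends l) (hl' : l'.Sublist l) : IsDartTrail ends l' :=
  ⟨fun d hd => h.1 d (hl'.subset hd), h.2.sublist (hl'.map _)⟩

lemma perm (h : IsDartTrail ends l) (hl' : l'.Perm l) : IsDartTrail ends l' :=
  ⟨fun d hd => h.1 d (hl'.subset hd), (hl'.map _).nodup_iff.2 h.2⟩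

end IsDartTrail

namespace Circuit

variable {ends : E → Sym2 V} {b : V}

lemma isDartTrail (C : Circuit ends) : IsDartTrail ends C.darts := ⟨C.valid, C.edgesNodup⟩

lemma isDartTrail_flatMap {L : List (Circuit ends)}
    (h : ((L.flatMap Circuit.darts).map Prod.fst).Nodup) :
    IsDartTrail ends (L.flatMap Circuit.darts) := by
  refine ⟨fun d hd => ?_, h⟩
  obtain ⟨C, -, hC⟩ := List.mem_flatMap.1 hd
  exact C.valid d hC

lemma exists_isDartWalk (C : Circuit ends) : ∃ u, IsDartWalk u u C.darts := by
  refine ⟨(C.darts.head C.nonempty).2.1, (isDartWalk_iff_isChain C.nonempty).2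
    ⟨C.chain, ?_, ?_⟩⟩
  · rw [List.head?_eq_some_head C.nonempty]; rfl
  · rw [← C.closed, List.head?_eq_some_head C.nonempty]; rfl

lemma basedAt_iff_isDartWalk {C : Circuit ends} : C.BasedAt b ↔ IsDartWalk b b C.darts := by
  rw [isDartWalk_iff_isChain C.nonempty, ← C.closed, BasedAt]
  exact ⟨fun h => ⟨C.chain, h, h⟩, fun h => h.2.1⟩

lemma BasedAt.hits {C : Circuit ends} (h : C.BasedAt b) : C.Hits b := by
  obtain ⟨d, t, hdt⟩ := List.exists_cons_of_ne_nil C.nonempty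
  have hw := basedAt_iff_isDartWalk.1 h
  rw [hdt, isDartWalk_cons] at hw
  exact ⟨d, hdt ▸ List.mem_cons_self, Or.inl hw.1⟩

lemma Hits.exists_tail_eq {C : Circuit ends} (h : C.Hits b) : ∃ d ∈ C.darts, d.2.1 = b := by
  obtain ⟨u, hu⟩ := C.exists_isDartWalk
  obtain ⟨d, hd, hb | hb⟩ := h
  · exact ⟨d, hd, hb⟩
  · have hb' : b ∈ C.darts.map (·.2.2) := List.mem_map.2 ⟨d, hd, hb⟩
    simpa using hu.tails_perm_heads.mem_iff.2 hb'

lemma exists_rotation {C : Circuit ends} (h : C.Hits b) :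
    ∃ l, l.Perm C.darts ∧ IsDartWalk b b l := by
  obtain ⟨u, hu⟩ := C.exists_isDartWalk
  obtain ⟨d, hd, rfl⟩ := h.exists_tail_eq
  obtain ⟨s, t, hst⟩ := List.append_of_mem hd
  rw [hst] at hu ⊢
  obtain ⟨hs, ht⟩ := hu.split
  exact ⟨(d :: t) ++ s, List.perm_append_comm, ht.append hs⟩

lemma exists_basedAt_of_isDartWalk {l : List (E × V × V)} (ht : IsDartTrail ends l)
    (hl : l ≠ []) (hw : IsDartWalk b b l) : ∃ C : Circuit ends, C.darts = l ∧ C.BasedAt b := by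
  obtain ⟨hchain, hhead, hlast⟩ := (isDartWalk_iff_isChain hl).1 hw
  exact ⟨⟨l, hl, ht.1, hchain, hhead.trans hlast.symm, ht.2⟩, rfl, hhead⟩

lemma exists_split_of_isDartWalk : ∀ {l : List (E × V × V)}, IsDartTrail ends l → l ≠ [] →
    IsDartWalk b b l → ∃ S : List (Circuit ends), S.flatMap Circuit.darts = l ∧
      (∀ C ∈ S, C.BasedAt b) ∧ S.length = (l.map (·.2.1)).count b
  | [], _, hl, _ => absurd rfl hl
  | d :: t, ht, hl, hw => by
    have hd : d.2.1 = b := (isDartWalk_cons.1 hw).1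
    by_cases hb : b ∈ t.map (·.2.1)
    · obtain ⟨x, hx, hxb⟩ := List.mem_map.1 hb
      obtain ⟨s, t', rfl⟩ := List.append_of_mem hx
      rw [← List.cons_append] at ht hw
      obtain ⟨hw₁, hw₂⟩ := hxb ▸ hw.split
      obtain ⟨S₁, hS₁, hS₁b, hS₁l⟩ := exists_split_of_isDartWalk
        (ht.sublist (List.sublist_append_left _ _)) (List.cons_ne_nil _ _) hw₁
      obtain ⟨S₂, hS₂, hS₂b, hS₂l⟩ := exists_split_of_isDartWalk
        (ht.sublist (List.sublist_append_right _ _)) (List.cons_ne_nil _ _) hw₂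
      refine ⟨S₁ ++ S₂, by rw [List.flatMap_append, hS₁, hS₂, List.cons_append], ?_, ?_⟩
      · simpa [or_imp, forall_and] using ⟨hS₁b, hS₂b⟩
      · rw [List.length_append, hS₁l, hS₂l, ← List.count_append, ← List.map_append,
          List.cons_append]
    · obtain ⟨C, hCl, hC⟩ := exists_basedAt_of_isDartWalk ht hl hw
      refine ⟨[C], by simp [hCl], by simpa using hC, ?_⟩
      simp [List.count_eq_zero.2 hb, hd]
termination_by l => l.length

lemma exists_split {C : Circuit ends} (h : C.Hits b) :
    ∃ S : List (Circuit ends), (S.flatMap Circuit.darts).Perm C.darts ∧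
      (∀ C' ∈ S, C'.BasedAt b) ∧ S.length = (C.darts.map (·.2.1)).count b := by
  obtain ⟨l, hl, hw⟩ := exists_rotation h
  obtain ⟨S, hS, hSb, hSl⟩ := exists_split_of_isDartWalk (C.isDartTrail.perm hl)
    (fun h => C.nonempty (List.Perm.nil_eq (h ▸ hl)).symm) hw
  exact ⟨S, hS ▸ hl, hSb, hSl.trans ((hl.map _).count_eq _)⟩

lemma sum_map_weight_of_perm (γ : E → ZMod 2) {S : List (Circuit ends)} {C : Circuit ends}
    (h : (S.flatMap Circuit.darts).Perm C.darts) : (S.map (·.weight γ)).sum = C.weight γ := by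
  rw [weight, ← ((h.map Prod.fst).map γ).sum_eq]
  clear h
  induction S with
  | nil => rfl
  | cons C S ih => rw [List.map_cons, List.sum_cons, ih, List.flatMap_cons]; simp [weight]

end Circuit

section Decomposition

variable {ends : E → Sym2 V} {k : ℕ} {C : Fin k → Circuit ends}

lemma isDecomposition_iff : IsDecomposition ends C ↔
    (((List.ofFn C).flatMap Circuit.darts).map Prod.fst).Nodup ∧
      ∀ e, e ∈ ((List.ofFn C).flatMap Circuit.darts).map Prod.fst := by
  have hedges : ∀ e i, e ∈ (C i).edges ↔ e ∈ (C i).darts.map Prod.fst := by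
    simp [Circuit.edges]
  rw [List.map_flatMap, List.nodup_flatMap, List.pairwise_ofFn]
  simp only [List.mem_flatMap, List.mem_ofFn', Set.mem_range, exists_exists_eq_and,
    Function.onFun, ← hedges]
  constructor
  · intro h
    refine ⟨⟨fun c _ => c.edgesNodup, fun i j hij e hi hj => ?_⟩, fun e => (h e).exists⟩
    exact hij.ne ((h e).unique ((hedges e i).2 hi) ((hedges e j).2 hj))
  · rintro ⟨⟨-, hdisj⟩, hcover⟩ e
    obtain ⟨i, hi⟩ := hcover e
    refine ⟨i, hi, fun j hj => ?_⟩
    rcases lt_trichotomy j i with hji | rfl | hij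
    · exact absurd ((hedges e i).1 hi) (hdisj hji ((hedges e j).1 hj))
    · rfl
    · exact absurd ((hedges e j).1 hj) (hdisj hij ((hedges e i).1 hi))

lemma IsDecomposition.isDartTrail (hC : IsDecomposition ends C) :
    IsDartTrail ends ((List.ofFn C).flatMap Circuit.darts) :=
  Circuit.isDartTrail_flatMap (isDecomposition_iff.1 hC).1

lemma IsDecomposition.of_perm (hC : IsDecomposition ends C) {L : List (Circuit ends)}
    (hL : (L.flatMap Circuit.darts).Perm ((List.ofFn C).flatMap Circuit.darts)) :
    IsDecomposition ends L.get := by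
  rw [isDecomposition_iff, List.ofFn_get]
  rw [isDecomposition_iff] at hC
  exact ⟨(hL.map _).nodup_iff.2 hC.1, fun e => (hL.map _).mem_iff.2 (hC.2 e)⟩

lemma IsDecomposition.card_le (hC : IsDecomposition ends C) : k ≤ Fintype.card E := by
  have hne : ∀ i, (C i).edges.Nonempty := fun i => by
    simp [Circuit.edges, List.toFinset_nonempty_iff, (C i).nonempty]
  choose e he using hne
  simpa using Fintype.card_le_of_injective e fun i j hij =>
    (hC (e i)).unique (he i) (hij ▸ he j)

lemma sum_incidence_eq_count (v : V) : ∀ {D : List (E × V × V)},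
    (∀ d ∈ D, ends d.1 = s(d.2.1, d.2.2)) →
    (D.map fun d => if ends d.1 = s(v, v) then 2 else if v ∈ ends d.1 then 1 else 0).sum =
      (D.map (·.2.1)).count v + (D.map (·.2.2)).count v
  | [], _ => rfl
  | d :: D, hD => by
    rw [List.map_cons, List.sum_cons, sum_incidence_eq_count v fun d' hd' =>
      hD d' (List.mem_cons_of_mem _ hd'), hD d List.mem_cons_self]
    obtain ⟨e, x, y⟩ := d
    simp only [List.map_cons, List.count_cons, beq_iff_eq]
    by_cases hx : x = v <;> by_cases hy : y = v
    · simp [hx, hy]; omega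
    · simp [hx, hy, Ne.symm hy]; omega
    · simp [hx, hy, Ne.symm hx]; omega
    · simp [hx, hy, Ne.symm hx, Ne.symm hy]

lemma IsDecomposition.two_mul_count_eq_degree (hC : IsDecomposition ends C) (v : V) :
    2 * (((List.ofFn C).flatMap Circuit.darts).map (·.2.1)).count v = degree ends v := by
  set D := (List.ofFn C).flatMap Circuit.darts
  have hends : (D.map (·.2.2)).count v = (D.map (·.2.1)).count v := by
    refine List.Perm.count_eq ?_ v
    simp only [D, List.map_flatMap]
    refine List.Perm.flatMap_left _ fun c _ => ?_
    obtain ⟨u, hu⟩ := c.exists_isDartWalk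
    exact hu.tails_perm_heads.symm
  have huniv : (D.map Prod.fst).toFinset = Finset.univ :=
    Finset.eq_univ_of_forall fun e => List.mem_toFinset.2 ((isDecomposition_iff.1 hC).2 e)
  rw [degree, ← huniv, List.sum_toFinset _ hC.isDartTrail.2, List.map_map,
    Function.comp_def, sum_incidence_eq_count v hC.isDartTrail.1, hends]
  ring

end Decomposition

section NonzeroCount

variable {ends : E → Sym2 V} {γ : E → ZMod 2}

lemma nonzeroCount_eq_countP : ∀ {k : ℕ} (C : Fin k → Circuit ends),
    nonzeroCount ends γ C = (List.ofFn C).countP (·.weight γ = 1)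
  | 0, _ => rfl
  | k + 1, C => by
    rw [nonzeroCount, Fin.card_filter_univ_succ', List.ofFn_succ, List.countP_cons, add_comm]
    congr 1
    · exact nonzeroCount_eq_countP fun i => C i.succ
    · simp

lemma nonzeroCount_get (L : List (Circuit ends)) :
    nonzeroCount ends γ L.get = L.countP (·.weight γ = 1) := by
  rw [nonzeroCount_eq_countP, List.ofFn_get]

lemma nonzeroCount_le {k : ℕ} (C : Fin k → Circuit ends) : nonzeroCount ends γ C ≤ k :=
  (Finset.card_filter_le _ _).trans_eq (Finset.card_fin k)

end NonzeroCount

section Flooding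

variable {ends : E → Sym2 V} {γ : E → ZMod 2} {b : V}

lemma zmod2_ne_zero_iff_eq_one : ∀ {x : ZMod 2}, x ≠ 0 ↔ x = 1 := by decide

lemma exists_flooding_of_decomposition {k : ℕ} {C : Fin k → Circuit ends}
    (hC : IsDecomposition ends C) (hCb : ∀ i, (C i).weight γ = 1 ∧ (C i).Hits b) :
    ∃ L : List (Circuit ends), IsFlooding ends b L.get ∧ k ≤ nonzeroCount ends γ L.get := by
  choose S hSperm hSb hSlen using fun i => Circuit.exists_split (hCb i).2
  set L := (List.finRange k).flatMap S
  have hL : (L.flatMap Circuit.darts).Perm ((List.ofFn C).flatMap Circuit.darts) := by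
    rw [List.flatMap_assoc, List.ofFn_eq_map, List.flatMap_map]
    exact List.Perm.flatMap_left _ fun i _ => hSperm i
  have hnz : ∀ i, 1 ≤ (S i).countP (·.weight γ = 1) := fun i => by
    have hsum : ((S i).map (·.weight γ)).sum ≠ 0 := by
      rw [Circuit.sum_map_weight_of_perm γ (hSperm i), (hCb i).1]
      exact one_ne_zero
    obtain ⟨_, hc, hc0⟩ := List.exists_mem_ne_zero_of_sum_ne_zero hsum
    obtain ⟨c, hc', rfl⟩ := List.mem_map.1 hc
    exact List.one_le_countP_iff.2 ⟨c, hc', by simpa using zmod2_ne_zero_iff_eq_one.1 hc0⟩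
  refine ⟨L, ⟨?_, hC.of_perm hL, fun j => ?_⟩, ?_⟩
  · have hcount := hC.two_mul_count_eq_degree b
    rw [List.map_flatMap, List.count_flatMap, List.ofFn_eq_map, List.map_map] at hcount
    rw [List.length_flatMap, ← hcount]
    simp [hSlen, Function.comp_def]
  · obtain ⟨i, -, hi⟩ := List.mem_flatMap.1 (List.get_mem L j)
    exact hSb i _ hi
  · rw [nonzeroCount_get, List.countP_flatMap]
    calc k = ((List.finRange k).map (List.countP (·.weight γ = 1) ∘ S)).length := by simp
      _ ≤ _ := List.length_le_sum_of_one_le _ (by simpa using hnz)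

lemma exists_nonzero_decomposition_of_flooding {k : ℕ} {C : Fin k → Circuit ends}
    (hC : IsFlooding ends b C) (hpos : 0 < nonzeroCount ends γ C) :
    ∃ L : List (Circuit ends), IsDecomposition ends L.get ∧
      (∀ c ∈ L, c.weight γ = 1 ∧ c.Hits b) ∧ L.length = nonzeroCount ends γ C := by
  obtain ⟨-, hdec, hbased⟩ := hC
  have hbasedL : ∀ c ∈ List.ofFn C, c.BasedAt b := by
    simpa [List.mem_ofFn'] using hbased
  rw [nonzeroCount_eq_countP, List.countP_eq_length_filter] at hpos ⊢
  obtain ⟨a, A, hA⟩ := List.exists_cons_of_length_pos hpos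
  set Z := (List.ofFn C).filter (fun c => ¬ c.weight γ = 1)
  have hperm : (a :: (A ++ Z)).Perm (List.ofFn C) := by
    simpa [hA, Z] using List.filter_append_perm (fun c => decide (c.weight γ = 1)) (List.ofFn C)
  have hAnz : ∀ c ∈ a :: A, c.weight γ = 1 := fun c hc => by
    rw [← hA] at hc
    exact of_decide_eq_true (List.mem_filter.1 hc).2
  have hZ0 : ∀ c ∈ Z, c.weight γ = 0 := fun c hc => by
    by_contra h
    exact of_decide_eq_true (List.mem_filter.1 hc).2 (zmod2_ne_zero_iff_eq_one.1 h)
  have hsub : (a :: Z).Sublist (a :: (A ++ Z)) := (List.sublist_append_right A Z).cons_cons a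
  obtain ⟨M, hM, hMb⟩ := Circuit.exists_basedAt_of_isDartWalk
    ((hdec.isDartTrail.perm (hperm.flatMap_right _)).sublist (hsub.flatMap _))
    (by simp [a.nonempty])
    (IsDartWalk.flatMap fun c hc =>
      Circuit.basedAt_iff_isDartWalk.1 (hbasedL c (hperm.subset (hsub.subset hc))))
  refine ⟨M :: A, hdec.of_perm ?_, fun c hc => ?_, by simp [hA]⟩
  · rw [List.flatMap_cons, hM, ← List.flatMap_append]
    exact (((List.perm_append_comm (l₁ := Z)).cons a).trans hperm).flatMap_right _
  · rcases List.mem_cons.1 hc with rfl | hc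
    · refine ⟨?_, hMb.hits⟩
      rw [← Circuit.sum_map_weight_of_perm γ (.of_eq hM.symm), List.map_cons,
        List.sum_cons, hAnz a List.mem_cons_self, List.sum_eq_zero, add_zero]
      simpa using hZ0
    · exact ⟨hAnz c (List.mem_cons_of_mem a hc),
        (hbasedL c (hperm.subset (List.mem_cons_of_mem a (List.mem_append_left Z hc)))).hits⟩

end Flooding

theorem flooding_eq_general (ends : E → Sym2 V) (γ : E → ZMod 2) (b : V) :
    sSup {n : ℕ | ∃ (k : ℕ) (C : Fin k → Circuit ends),
        IsFlooding ends b C ∧ n = nonzeroCount ends γ C} =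
      floodingNumber ends γ b := by
  have hflood : BddAbove {n : ℕ | ∃ (k : ℕ) (C : Fin k → Circuit ends),
      IsFlooding ends b C ∧ n = nonzeroCount ends γ C} :=
    ⟨degree ends b / 2, by rintro _ ⟨k, C, hC, rfl⟩; exact hC.1 ▸ nonzeroCount_le C⟩
  have hdec : BddAbove {k : ℕ | ∃ C : Fin k → Circuit ends, IsDecomposition ends C ∧
      ∀ i, (C i).weight γ = 1 ∧ (C i).Hits b} :=
    ⟨Fintype.card E, by rintro k ⟨C, hC, -⟩; exact hC.card_le⟩
  apply le_antisymm
  · refine csSup_le' ?_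
    rintro _ ⟨k, C, hC, rfl⟩
    rcases Nat.eq_zero_or_pos (nonzeroCount ends γ C) with h0 | hpos
    · exact h0 ▸ Nat.zero_le _
    obtain ⟨L, hL, hLnz, hlen⟩ := exists_nonzero_decomposition_of_flooding hC hpos
    exact hlen ▸ le_csSup hdec ⟨L.get, hL, fun i => hLnz _ (List.get_mem L i)⟩
  · refine csSup_le' ?_
    rintro k ⟨C, hC, hCnz⟩
    obtain ⟨L, hL, hk⟩ := exists_flooding_of_decomposition hC hCnz
    exact hk.trans (le_csSup hflood ⟨_, _, hL, rfl⟩)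

/-- the maximum number of non-zero circuits in a flooding equals the
flooding number. -/
theorem flooding_eq (ends : E → Sym2 V) (γ : E → ZMod 2) (b : V)
    (hE : IsEulerian ends) :
    sSup {n : ℕ | ∃ (k : ℕ) (C : Fin k → Circuit ends),
        IsFlooding ends b C ∧ n = nonzeroCount ends γ C} =
      floodingNumber ends γ b :=
  flooding_eq_general ends γ b

end SignedFlood
end
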